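/- If H is a connected graph, then sdim_f(H) ≤ sdim_f(K_1 ⊙ H) ≤ (1 + |V(H)|)/2, where K_1 ⊙ H is the join of a single vertex with H. -/

import Mathlib

open SimpleGraph

/-- `Sset G x y` is the set `S{x,y}` of vertices `z` such that `x` lies on some shortest
`y`–`z` path or `y` lies on some shortest `x`–`z` path in `G`. -/
def Sset {V : Type*} (G : SimpleGraph V) (x y : V) : Set V :=
  {z | (∃ p : G.Walk y z, p.length = G.dist y z ∧ x ∈ p.support) ∨
       (∃ p : G.Walk x z, p.length = G.dist x z ∧ y ∈ p.support)}

/-- A strong resolving function of `G`: `g : V → [0,1]` with `g(S{x,y}) ≥ 1` for all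
distinct vertices `x, y`. -/
def IsSRF {V : Type*} (G : SimpleGraph V) (g : V → ℝ) : Prop :=
  (∀ v, 0 ≤ g v ∧ g v ≤ 1) ∧ ∀ x y : V, x ≠ y → 1 ≤ ∑ᶠ z ∈ Sset G x y, g z

/-- The fractional strong metric dimension of `G`. -/
noncomputable def sdimf {V : Type*} (G : SimpleGraph V) : ℝ :=
  sInf {s : ℝ | ∃ g : V → ℝ, IsSRF G g ∧ s = ∑ᶠ v, g v}

/-- A strong resolving set of `G`: every pair of distinct vertices is strongly resolved
by some vertex of `S` (i.e. some vertex of `S` lies in `S{x,y}`). -/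
def IsSRSet {V : Type*} (G : SimpleGraph V) (S : Set V) : Prop :=
  ∀ x y : V, x ≠ y → ∃ z ∈ S, z ∈ Sset G x y

/-- The strong metric dimension of `G`: the minimum cardinality of a strong resolving set. -/
noncomputable def sdim {V : Type*} (G : SimpleGraph V) : ℕ :=
  sInf {n : ℕ | ∃ S : Set V, IsSRSet G S ∧ S.ncard = n}

/-- `u` is maximally distant from `v`: `d(u,v) ≥ d(w,v)` for every neighbor `w` of `u`. -/
def MaxDistFrom {V : Type*} (G : SimpleGraph V) (u v : V) : Prop :=
  ∀ w : V, G.Adj u w → G.dist w v ≤ G.dist u v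

/-- `u` and `v` are mutually maximally distant (MMD) in `G`. -/
def MMD {V : Type*} (G : SimpleGraph V) (u v : V) : Prop :=
  u ≠ v ∧ MaxDistFrom G u v ∧ MaxDistFrom G v u

/-- The strong resolving graph of `G` (on the ambient vertex set): `u ~ v` iff `u` MMD `v`. -/
def SRGraph {V : Type*} (G : SimpleGraph V) : SimpleGraph V where
  Adj := MMD G
  symm := ⟨fun _ _ h => ⟨h.1.symm, h.2.2, h.2.1⟩⟩
  loopless := ⟨fun _ h => h.1 rfl⟩

/-- `M(G)`: the set of vertices that are mutually maximally distant with some vertex. -/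
def Mset {V : Type*} (G : SimpleGraph V) : Set V := {x | ∃ y, MMD G x y}

/-- The matching number of `G`. -/
noncomputable def matchNum {V : Type*} (G : SimpleGraph V) : ℕ :=
  sSup {n : ℕ | ∃ M : G.Subgraph, M.IsMatching ∧ M.edgeSet.ncard = n}

/-- The corona product `G ⊙ H`. -/
def corona {V W : Type*} (G : SimpleGraph V) (H : SimpleGraph W) :
    SimpleGraph (V ⊕ V × W) where
  Adj x y :=
    match x, y with
    | Sum.inl u, Sum.inl u' => G.Adj u u'
    | Sum.inl u, Sum.inr iw => u = iw.1
    | Sum.inr iw, Sum.inl u => iw.1 = u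
    | Sum.inr iw, Sum.inr iw' => iw.1 = iw'.1 ∧ H.Adj iw.2 iw'.2
  symm := by
    refine ⟨?_⟩
    rintro (u | iw) (u' | iw') h
    · exact G.adj_symm h
    · exact h.symm
    · exact h.symm
    · exact ⟨h.1.symm, H.adj_symm h.2⟩
  loopless := by
    refine ⟨?_⟩
    rintro (u | iw) h
    · exact G.loopless.irrefl u h
    · exact H.loopless.irrefl iw.2 h.2

/-- `K₁ ⊙ H`: the graph obtained from `H` by adding one new vertex adjacent to every
vertex of `H`. -/
def cone {W : Type*} (H : SimpleGraph W) : SimpleGraph (Option W) where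
  Adj x y :=
    match x, y with
    | none, none => False
    | none, some _ => True
    | some _, none => True
    | some w, some w' => H.Adj w w'
  symm := by
    refine ⟨?_⟩
    rintro (_ | w) (_ | w') h
    · exact h
    · exact trivial
    · exact trivial
    · exact H.adj_symm h
  loopless := by
    refine ⟨?_⟩
    rintro (_ | w) h
    · exact h
    · exact H.loopless.irrefl w h

/-- The lexicographic product `G[H]`. -/
def lexProd {V W : Type*} (G : SimpleGraph V) (H : SimpleGraph W) :
    SimpleGraph (V × W) where
  Adj x y := G.Adj x.1 y.1 ∨ (x.1 = y.1 ∧ H.Adj x.2 y.2)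
  symm := by
    refine ⟨?_⟩
    rintro x y (h | ⟨h1, h2⟩)
    · exact Or.inl (G.adj_symm h)
    · exact Or.inr ⟨h1.symm, H.adj_symm h2⟩
  loopless := by
    refine ⟨?_⟩
    rintro x (h | ⟨_, h2⟩)
    · exact G.loopless.irrefl x.1 h
    · exact H.loopless.irrefl x.2 h2

/-- `SL{x,y} = (N[x] ∪ N[y]) ∩ S{x,y}`. -/
def SLset {W : Type*} (H : SimpleGraph W) (x y : W) : Set W :=
  (insert x (H.neighborSet x) ∪ insert y (H.neighborSet y)) ∩ Sset H x y

/-- A strong locating function of `H`. -/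
def IsSLF {W : Type*} (H : SimpleGraph W) (f : W → ℝ) : Prop :=
  (∀ v, 0 ≤ f v ∧ f v ≤ 1) ∧ ∀ x y : W, x ≠ y → 1 ≤ ∑ᶠ z ∈ SLset H x y, f z

/-- `sl_f(H)`: the minimum weight of a strong locating function of `H`. -/
noncomputable def slf {W : Type*} (H : SimpleGraph W) : ℝ :=
  sInf {s : ℝ | ∃ f : W → ℝ, IsSLF H f ∧ s = ∑ᶠ v, f v}

/-- `u` has a true twin: some other vertex with the same closed neighborhood. -/
def HasTrueTwin {V : Type*} (G : SimpleGraph V) (u : V) : Prop :=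
  ∃ v : V, v ≠ u ∧ insert v (G.neighborSet v) = insert u (G.neighborSet u)

/-- `u` has a false twin: some other vertex with the same open neighborhood. -/
def HasFalseTwin {V : Type*} (G : SimpleGraph V) (u : V) : Prop :=
  ∃ v : V, v ≠ u ∧ G.neighborSet v = G.neighborSet u

/-- `m₁(G)`: number of vertices in type-1 (singleton) classes of the twin relation. -/
noncomputable def m1 {V : Type*} (G : SimpleGraph V) : ℕ :=
  {u : V | ¬ HasTrueTwin G u ∧ ¬ HasFalseTwin G u}.ncard

/-- `m₂(G)`: number of vertices in type-2 (clique) classes of the twin relation. -/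
noncomputable def m2 {V : Type*} (G : SimpleGraph V) : ℕ :=
  {u : V | HasTrueTwin G u}.ncard

/-- `m₃(G)`: number of vertices in type-3 (independent set) classes of the twin relation. -/
noncomputable def m3 {V : Type*} (G : SimpleGraph V) : ℕ :=
  {u : V | HasFalseTwin G u}.ncard

/-- The strong resolving graph of `G` (whose vertex set is `M(G)`) is Hamiltonian:
there is a cycle in `SRGraph G` passing through every vertex of `M(G)`. -/
def SRHamiltonian {V : Type*} (G : SimpleGraph V) : Prop :=
  ∃ (u : V) (p : (SRGraph G).Walk u u), p.IsCycle ∧ ∀ v ∈ Mset G, v ∈ p.support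

/-!
Distances in `K₁ ⊙ H` are those of `H` truncated at `2`. Hence if `x` lies on a shortest
`y`–`z` path of the cone, with `x ≠ y` vertices of `H`, then `z` is a vertex of `H` and `x` lies
on a shortest `y`–`z` path of `H`. So `S{x,y}` computed in the cone is contained in `S{x,y}`
computed in `H`, and a strong resolving function of the cone restricts to one of `H`.
The upper bound is the weight of the constant function `1/2`, which strongly resolves every
connected graph because `x, y ∈ S{x,y}`.
-/

open Function

theorem finsum_mem_le_finsum_mem_of_subset {α M : Type*} [AddCommMonoid M] [PartialOrder M]
    [IsOrderedAddMonoid M] {f : α → M} (hf : ∀ a, 0 ≤ f a)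
    {s t : Set α} (hst : s ⊆ t) (ht : t.Finite) :
    ∑ᶠ a ∈ s, f a ≤ ∑ᶠ a ∈ t, f a := by
  rw [← finsum_mem_add_sdiff hst ht]
  exact le_add_of_nonneg_right (finsum_nonneg fun a => finsum_nonneg fun _ => hf a)

theorem finsum_comp_le_finsum {α β M : Type*} [AddCommMonoid M] [PartialOrder M]
    [IsOrderedAddMonoid M] [Finite β] {f : α → β} (hf : Injective f) {g : β → M} (hg : ∀ b, 0 ≤ g b) :
    ∑ᶠ a, g (f a) ≤ ∑ᶠ b, g b :=
  calc ∑ᶠ a, g (f a) = ∑ᶠ b ∈ Set.range f, g b := (finsum_mem_range hf).symm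
    _ ≤ ∑ᶠ b ∈ Set.univ, g b :=
      finsum_mem_le_finsum_mem_of_subset hg (Set.subset_univ _) Set.finite_univ
    _ = ∑ᶠ b, g b := finsum_mem_univ g

section Geodesics

variable {V : Type*} {G : SimpleGraph V}

theorem SimpleGraph.Connected.exists_shortest_walk_mem_support_iff (hG : G.Connected)
    {u v w : V} :
    (∃ p : G.Walk u w, p.length = G.dist u w ∧ v ∈ p.support) ↔
      G.dist u v + G.dist v w = G.dist u w := by
  classical
  constructor
  · rintro ⟨p, hp, hv⟩
    have hsplit := congrArg Walk.length (p.take_spec hv)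
    rw [Walk.length_append] at hsplit
    have := G.dist_le (p.takeUntil v hv)
    have := G.dist_le (p.dropUntil v hv)
    have := hG.dist_triangle (u := u) (v := v) (w := w)
    omega
  · intro h
    obtain ⟨p, hp⟩ := hG.exists_walk_length_eq_dist u v
    obtain ⟨q, hq⟩ := hG.exists_walk_length_eq_dist v w
    exact ⟨p.append q, by rw [Walk.length_append, hp, hq, h],
      (p.mem_support_append_iff q).mpr (Or.inl p.end_mem_support)⟩

theorem SimpleGraph.Connected.mem_Sset_iff (hG : G.Connected) {x y z : V} :
    z ∈ Sset G x y ↔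
      G.dist y x + G.dist x z = G.dist y z ∨ G.dist x y + G.dist y z = G.dist x z := by
  simp only [Sset, Set.mem_ofPred_eq, hG.exists_shortest_walk_mem_support_iff]

end Geodesics

section FractionalStrongMetricDimension

variable {V V' : Type*} {G : SimpleGraph V} {G' : SimpleGraph V'}

theorem sdimf_le_finsum {g : V → ℝ} (hg : IsSRF G g) : sdimf G ≤ ∑ᶠ v, g v :=
  csInf_le ⟨0, by rintro s ⟨g, hg, rfl⟩; exact finsum_nonneg fun v => (hg.1 v).1⟩ ⟨g, hg, rfl⟩

theorem isSRF_const_half [Finite V] (hG : G.Connected) : IsSRF G fun _ => (1 / 2 : ℝ) := by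
  refine ⟨fun _ => by norm_num, fun x y hxy => ?_⟩
  have hpair : ({x, y} : Set V) ⊆ Sset G x y := by
    rintro v (rfl | rfl) <;> simp [hG.mem_Sset_iff]
  calc (1 : ℝ) = ∑ᶠ v ∈ ({x, y} : Set V), (1 / 2 : ℝ) := by
        rw [finsum_mem_pair hxy]; norm_num
    _ ≤ _ := finsum_mem_le_finsum_mem_of_subset (fun _ => by norm_num) hpair (Set.toFinite _)

theorem sdimf_le_card_div_two [Fintype V] (hG : G.Connected) :
    sdimf G ≤ Fintype.card V / 2 :=
  calc sdimf G ≤ ∑ᶠ _ : V, (1 / 2 : ℝ) := sdimf_le_finsum (isSRF_const_half hG)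
    _ = Fintype.card V / 2 := by
      rw [finsum_eq_sum_of_fintype, Finset.sum_const, Finset.card_univ, nsmul_eq_mul]; ring

theorem IsSRF.comp [Finite V'] {f : V → V'} (hf : Injective f)
    (hS : ∀ x y, x ≠ y → Sset G' (f x) (f y) ⊆ f '' Sset G x y) {g : V' → ℝ}
    (hg : IsSRF G' g) : IsSRF G (g ∘ f) := by
  refine ⟨fun v => hg.1 (f v), fun x y hxy => ?_⟩
  calc (1 : ℝ) ≤ ∑ᶠ z ∈ Sset G' (f x) (f y), g z := hg.2 _ _ (hf.ne hxy)
    _ ≤ ∑ᶠ z ∈ f '' Sset G x y, g z :=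
      finsum_mem_le_finsum_mem_of_subset (fun v => (hg.1 v).1) (hS x y hxy) (Set.toFinite _)
    _ = ∑ᶠ v ∈ Sset G x y, g (f v) := finsum_mem_image hf.injOn

theorem sdimf_le_sdimf_of_Sset_subset_image [Finite V'] {f : V → V'} (hf : Injective f)
    (hS : ∀ x y, x ≠ y → Sset G' (f x) (f y) ⊆ f '' Sset G x y) (hG' : ∃ g, IsSRF G' g) :
    sdimf G ≤ sdimf G' := by
  obtain ⟨g₀, hg₀⟩ := hG'
  refine le_csInf ⟨_, g₀, hg₀, rfl⟩ ?_
  rintro s ⟨g, hg, rfl⟩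
  exact (sdimf_le_finsum (hg.comp hf hS)).trans (finsum_comp_le_finsum hf fun v => (hg.1 v).1)

end FractionalStrongMetricDimension

section Cone

variable {W : Type*} (H : SimpleGraph W)

theorem cone_connected : (cone H).Connected := by
  have hapex : ∀ v : Option W, (cone H).Reachable none v := by
    rintro (_ | w)
    · rfl
    · exact Adj.reachable (G := cone H) trivial
  exact (connected_iff _).mpr ⟨fun u v => (hapex u).symm.trans (hapex v), ⟨none⟩⟩

theorem cone_dist_some_none (w : W) : (cone H).dist (some w) none = 1 :=
  dist_eq_one_iff_adj.mpr trivial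

variable {H}

theorem cone_dist_some_some (hH : H.Connected) (a b : W) :
    (cone H).dist (some a) (some b) = min (H.dist a b) 2 := by
  by_cases hab : a = b
  · simp [hab]
  by_cases hadj : H.Adj a b
  · rw [dist_eq_one_iff_adj.mpr hadj,
      dist_eq_one_iff_adj.mpr (show (cone H).Adj (some a) (some b) from hadj)]
    rfl
  have hc0 : (cone H).dist (some a) (some b) ≠ 0 := by
    simpa [(cone_connected H).dist_eq_zero_iff] using hab
  have hc1 : (cone H).dist (some a) (some b) ≠ 1 := fun h =>
    hadj ((dist_eq_one_iff_adj (G := cone H)).mp h)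
  have hc2 : (cone H).dist (some a) (some b) ≤ 2 :=
    dist_le (Walk.cons (show (cone H).Adj (some a) none from trivial)
      (Walk.cons (show (cone H).Adj none (some b) from trivial) Walk.nil))
  have hH0 : H.dist a b ≠ 0 := by simpa [hH.dist_eq_zero_iff] using hab
  have hH1 : H.dist a b ≠ 1 := fun h => hadj (dist_eq_one_iff_adj.mp h)
  omega

theorem cone_dist_add_dist_eq (hH : H.Connected) {x y : W} (hxy : x ≠ y) {z : Option W}
    (h : (cone H).dist (some y) (some x) + (cone H).dist (some x) z = (cone H).dist (some y) z) :
    ∃ w, z = some w ∧ H.dist y x + H.dist x w = H.dist y w := by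
  have hyx : H.dist y x ≠ 0 := by simpa [hH.dist_eq_zero_iff] using hxy.symm
  cases z with
  | none =>
    simp only [cone_dist_some_none, cone_dist_some_some hH] at h
    omega
  | some w =>
    refine ⟨w, rfl, ?_⟩
    simp only [cone_dist_some_some hH] at h
    have := hH.dist_triangle (u := y) (v := x) (w := w)
    have := hH.dist_triangle (u := y) (v := w) (w := x)
    have := H.dist_comm (u := w) (v := x)
    omega

theorem cone_Sset_subset_image (hH : H.Connected) {x y : W} (hxy : x ≠ y) :
    Sset (cone H) (some x) (some y) ⊆ some '' Sset H x y := by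
  intro z hz
  rcases (cone_connected H).mem_Sset_iff.mp hz with h | h
  · obtain ⟨w, rfl, hw⟩ := cone_dist_add_dist_eq hH hxy h
    exact ⟨w, hH.mem_Sset_iff.mpr (Or.inl hw), rfl⟩
  · obtain ⟨w, rfl, hw⟩ := cone_dist_add_dist_eq hH hxy.symm h
    exact ⟨w, hH.mem_Sset_iff.mpr (Or.inr hw), rfl⟩

end Cone

/-- If `H` is a connected graph, then
`sdim_f(H) ≤ sdim_f(K₁ ⊙ H) ≤ (1 + |V(H)|)/2`. -/
theorem sdimf_cone_bounds {W : Type*} [Fintype W] (H : SimpleGraph W)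
    (hH : H.Connected) :
    sdimf H ≤ sdimf (cone H) ∧ sdimf (cone H) ≤ (1 + (Fintype.card W : ℝ)) / 2 := by
  have hcone := cone_connected H
  refine ⟨sdimf_le_sdimf_of_Sset_subset_image (Option.some_injective W)
    (fun _ _ hxy => cone_Sset_subset_image hH hxy) ⟨_, isSRF_const_half hcone⟩, ?_⟩
  calc sdimf (cone H) ≤ Fintype.card (Option W) / 2 := sdimf_le_card_div_two hcone
    _ = (1 + Fintype.card W) / 2 := by rw [Fintype.card_option]; push_cast; ring
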